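/- Integration-by-parts identity for the curvature cross term: ∫_{ℝ^d} (ε Δu − ε^{-1} W'(u)) (H·∇u) dx = ∫_{ℝ^d} (∇·H) ((ε/2)|∇u|² + ε^{-1} W(u)) dx − ε ∫_{ℝ^d} ∇H : (∇u ⊗ ∇u) dx, where ∇H : (∇u ⊗ ∇u) = Σ_{i,j} ∂_i H_j ∂_i u ∂_j u. -/

import Mathlib

/-!
With `f = ⟪H, ∇u⟫` and the energy density `e = (ε/2)|∇u|² + ε⁻¹ W(u)`, Green's identity gives
`∫ Δu f = -∫ ∇f · ∇u = -∫ ∇H : (∇u ⊗ ∇u) - ∫ D²u(H, ∇u)`, while integrating by parts against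
`∇·H` gives `∫ (∇·H) e = -∫ H · ∇e = -ε ∫ D²u(H, ∇u) - ε⁻¹ ∫ W'(u) f`. The Hessian terms, equal
by symmetry of `D²u`, cancel in `ε ∫ Δu f - ε⁻¹ ∫ W'(u) f - ∫ (∇·H) e`.
-/

open MeasureTheory Set
open scoped RealInnerProductSpace

noncomputable section

/-- The `i`-th standard basis vector of `ℝ^d`. -/
def eb {d : ℕ} (i : Fin d) : EuclideanSpace ℝ (Fin d) :=
  EuclideanSpace.single i 1

/-- The Laplacian `Δf = ∑ i ∂_i ∂_i f`. -/
def lap {d : ℕ} (f : EuclideanSpace ℝ (Fin d) → ℝ) (x : EuclideanSpace ℝ (Fin d)) : ℝ :=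
  ∑ i, fderiv ℝ (fun y => fderiv ℝ f y (eb i)) x (eb i)

/-- The divergence `∇·F = ∑ i ∂_i F_i`. -/
def divE {d : ℕ} (F : EuclideanSpace ℝ (Fin d) → EuclideanSpace ℝ (Fin d))
    (x : EuclideanSpace ℝ (Fin d)) : ℝ :=
  ∑ i, ⟪fderiv ℝ F x (eb i), eb i⟫

section IntegrationByParts

variable {E : Type*} [NormedAddCommGroup E] [NormedSpace ℝ E] [FiniteDimensional ℝ E]
  [MeasurableSpace E] [BorelSpace E] {μ : Measure E} [μ.IsAddHaarMeasure]

theorem integral_sum_mul_fderiv_eq_neg_sum_fderiv_mul_of_hasCompactSupport {ι : Type*}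
    (s : Finset ι) {f g : ι → E → ℝ} (hf : ∀ i, ContDiff ℝ 1 (f i))
    (hg : ∀ i, ContDiff ℝ 1 (g i)) (hfs : ∀ i, HasCompactSupport (f i)) (v : ι → E) :
    ∫ x, ∑ i ∈ s, f i x * fderiv ℝ (g i) x (v i) ∂μ
      = -∫ x, ∑ i ∈ s, fderiv ℝ (f i) x (v i) * g i x ∂μ := by
  have hfg' : ∀ i, Integrable (fun x => f i x * fderiv ℝ (g i) x (v i)) μ := fun i =>
    ((hf i).continuous.mul (((hg i).continuous_fderiv one_ne_zero).clm_apply continuous_const)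
      ).integrable_of_hasCompactSupport (hfs i).mul_right
  have hf'g : ∀ i, Integrable (fun x => fderiv ℝ (f i) x (v i) * g i x) μ := fun i =>
    ((((hf i).continuous_fderiv one_ne_zero).clm_apply continuous_const).mul (hg i).continuous
      ).integrable_of_hasCompactSupport ((hfs i).fderiv_apply ℝ (v i)).mul_right
  rw [integral_finsetSum s fun i _ => hfg' i, integral_finsetSum s fun i _ => hf'g i,
    ← Finset.sum_neg_distrib]
  refine Finset.sum_congr rfl fun i _ =>
    integral_mul_fderiv_eq_neg_fderiv_mul_of_integrable (hf'g i) (hfg' i) ?_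
      (fun x _ => (hf i).differentiable one_ne_zero x)
      (fun x _ => (hg i).differentiable one_ne_zero x)
  exact ((hf i).continuous.mul (hg i).continuous).integrable_of_hasCompactSupport (hfs i).mul_right

end IntegrationByParts

section Euclidean

variable {d : ℕ}

theorem sum_inner_eb_mul_apply (L : EuclideanSpace ℝ (Fin d) →L[ℝ] ℝ)
    (w : EuclideanSpace ℝ (Fin d)) : ∑ i, ⟪w, eb i⟫ * L (eb i) = L w := by
  conv_rhs => rw [← (EuclideanSpace.basisFun (Fin d) ℝ).sum_repr' w]
  simp [eb, real_inner_comm]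

theorem sum_sum_inner_eb_eq_inner_apply_self
    (L : EuclideanSpace ℝ (Fin d) →L[ℝ] EuclideanSpace ℝ (Fin d)) (w : EuclideanSpace ℝ (Fin d)) :
    ∑ i, ∑ j, ⟪L (eb i), eb j⟫ * ⟪w, eb i⟫ * ⟪w, eb j⟫ = ⟪L w, w⟫ := by
  calc ∑ i, ∑ j, ⟪L (eb i), eb j⟫ * ⟪w, eb i⟫ * ⟪w, eb j⟫
      = ∑ i, ⟪w, eb i⟫ * ((innerSL ℝ w).comp L) (eb i) := by
        refine Finset.sum_congr rfl fun i _ => ?_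
        have expand := sum_inner_eb_mul_apply (innerSL ℝ (L (eb i))) w
        simp only [innerSL_apply_apply] at expand
        rw [ContinuousLinearMap.comp_apply, innerSL_apply_apply, real_inner_comm (L (eb i)) w,
          ← expand, Finset.mul_sum]
        exact Finset.sum_congr rfl fun j _ => by ring
    _ = ⟪L w, w⟫ := by rw [sum_inner_eb_mul_apply, ContinuousLinearMap.comp_apply,
        innerSL_apply_apply, real_inner_comm]

theorem integral_lap_mul_eq_neg_integral_fderiv_gradient {u f : EuclideanSpace ℝ (Fin d) → ℝ}
    (hu : ContDiff ℝ 2 u) (hf : ContDiff ℝ 1 f) (hfs : HasCompactSupport f) :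
    ∫ x, lap u x * f x = -∫ x, fderiv ℝ f x (gradient u x) := by
  have hdu : ∀ i, ContDiff ℝ 1 (fun y => fderiv ℝ u y (eb i)) := fun i =>
    (hu.fderiv_right le_rfl).clm_apply contDiff_const
  have key := integral_sum_mul_fderiv_eq_neg_sum_fderiv_mul_of_hasCompactSupport (μ := volume)
    Finset.univ (fun _ => hf) hdu (fun _ => hfs) eb
  have hlap : ∀ x, lap u x * f x = ∑ i, f x * fderiv ℝ (fun y => fderiv ℝ u y (eb i)) x (eb i) :=
    fun x => by rw [lap, Finset.sum_mul]; exact Finset.sum_congr rfl fun i _ => mul_comm _ _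
  have hgrad : ∀ x, ∑ i, fderiv ℝ f x (eb i) * fderiv ℝ u x (eb i)
      = fderiv ℝ f x (gradient u x) := fun x => by
    rw [← sum_inner_eb_mul_apply _ (gradient u x)]
    exact Finset.sum_congr rfl fun i _ => by rw [inner_gradient_left, mul_comm]
  simp only [hlap, key, hgrad]

theorem integral_divE_mul_eq_neg_integral_fderiv
    {G : EuclideanSpace ℝ (Fin d) → EuclideanSpace ℝ (Fin d)} {g : EuclideanSpace ℝ (Fin d) → ℝ}
    (hG : ContDiff ℝ 1 G) (hGs : HasCompactSupport G) (hg : ContDiff ℝ 1 g) :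
    ∫ x, divE G x * g x = -∫ x, fderiv ℝ g x (G x) := by
  have key := integral_sum_mul_fderiv_eq_neg_sum_fderiv_mul_of_hasCompactSupport (μ := volume)
    Finset.univ (f := fun i y => ⟪G y, eb i⟫) (fun _ => hG.inner ℝ contDiff_const) (fun _ => hg)
    (fun i => hGs.comp_left (g := fun v => ⟪v, eb i⟫) (inner_zero_left _)) eb
  have hG' : ∀ x, ∑ i, ⟪G x, eb i⟫ * fderiv ℝ g x (eb i) = fderiv ℝ g x (G x) := fun x =>
    sum_inner_eb_mul_apply _ _
  have hdiv : ∀ x, ∑ i, fderiv ℝ (fun y => ⟪G y, eb i⟫) x (eb i) * g x = divE G x * g x :=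
    fun x => by
      rw [divE, Finset.sum_mul]
      refine Finset.sum_congr rfl fun i _ => ?_
      rw [fderiv_inner_apply ℝ (hG.differentiable one_ne_zero x) (differentiableAt_const _)]
      simp
  simp only [hG', hdiv] at key
  rw [key, neg_neg]

end Euclidean

section Gradient

variable {F : Type*} [NormedAddCommGroup F] [InnerProductSpace ℝ F] [CompleteSpace F]
  {u : F → ℝ}

theorem hasFDerivAt_gradient {D : F →L[ℝ] F →L[ℝ] ℝ} {x : F}
    (h : HasFDerivAt (fderiv ℝ u) D x) :
    HasFDerivAt (gradient u)
      ((InnerProductSpace.toDual ℝ F).symm.toContinuousLinearEquiv.toContinuousLinearMap ∘L D) x :=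
  (InnerProductSpace.toDual ℝ F).symm.toContinuousLinearEquiv.hasFDerivAt.comp x h

theorem ContDiff.gradient {n : WithTop ℕ∞} (hu : ContDiff ℝ (n + 1) u) :
    ContDiff ℝ n (gradient u) :=
  (InnerProductSpace.toDual ℝ F).symm.contDiff.comp (hu.fderiv_right le_rfl)

theorem hasFDerivAt_norm_sq_gradient {x : F} (h : DifferentiableAt ℝ (fderiv ℝ u) x) :
    HasFDerivAt (fun y => ‖gradient u y‖ ^ 2)
      (2 • (fderiv ℝ (fderiv ℝ u) x).flip (gradient u x)) x := by
  refine (hasFDerivAt_gradient h.hasFDerivAt).norm_sq.congr_fderiv ?_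
  ext v
  simp only [smul_apply, ContinuousLinearMap.comp_apply,
    ContinuousLinearMap.flip_apply, innerSL_apply_apply, ContinuousLinearEquiv.coe_coe,
    LinearIsometryEquiv.coe_toContinuousLinearEquiv]
  rw [real_inner_comm, InnerProductSpace.toDual_symm_apply]

end Gradient

section CrossTerm

variable {d : ℕ} {u : EuclideanSpace ℝ (Fin d) → ℝ}
  {H : EuclideanSpace ℝ (Fin d) → EuclideanSpace ℝ (Fin d)}

theorem continuous_lap (hu : ContDiff ℝ 2 u) : Continuous (lap u) :=
  continuous_finsetSum _ fun i _ =>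
    (((hu.fderiv_right le_rfl).clm_apply (contDiff_const (c := eb i))).continuous_fderiv
      one_ne_zero).clm_apply continuous_const

theorem integrable_mul_inner_gradient {φ : EuclideanSpace ℝ (Fin d) → ℝ} (hφ : Continuous φ)
    (hu : ContDiff ℝ 1 u) (hH : Continuous H) (hHs : HasCompactSupport H) :
    Integrable fun x => φ x * ⟪H x, gradient u x⟫ :=
  (hφ.mul (hH.inner (hu.gradient (n := 0)).continuous)).integrable_of_hasCompactSupport
    (.intro hHs fun x hx => by simp [image_eq_zero_of_notMem_tsupport hx])

theorem integrable_fderiv_fderiv_apply_gradient (hu : ContDiff ℝ 2 u) (hH : Continuous H)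
    (hHs : HasCompactSupport H) :
    Integrable fun x => fderiv ℝ (fderiv ℝ u) x (H x) (gradient u x) :=
  ((((hu.fderiv_right le_rfl).continuous_fderiv one_ne_zero).clm_apply hH).clm_apply
    (hu.gradient (n := 1)).continuous).integrable_of_hasCompactSupport
    (.intro hHs fun x hx => by simp [image_eq_zero_of_notMem_tsupport hx])

theorem integral_lap_mul_inner_gradient (hu : ContDiff ℝ 2 u) (hH : ContDiff ℝ 1 H)
    (hHs : HasCompactSupport H) :
    ∫ x, lap u x * ⟪H x, gradient u x⟫
      = -(∫ x, ⟪fderiv ℝ H x (gradient u x), gradient u x⟫)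
        - ∫ x, fderiv ℝ (fderiv ℝ u) x (H x) (gradient u x) := by
  have hdu : ContDiff ℝ 1 (fderiv ℝ u) := hu.fderiv_right le_rfl
  have hinner : ∀ x, ⟪H x, gradient u x⟫ = fderiv ℝ u x (H x) := fun x => by
    rw [real_inner_comm, inner_gradient_left]
  have hDf : ∀ x, fderiv ℝ (fun y => fderiv ℝ u y (H y)) x (gradient u x)
      = ⟪fderiv ℝ H x (gradient u x), gradient u x⟫
        + fderiv ℝ (fderiv ℝ u) x (H x) (gradient u x) := fun x => by
    rw [fderiv_clm_apply (hdu.differentiable one_ne_zero x) (hH.differentiable one_ne_zero x),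
      add_apply, ContinuousLinearMap.comp_apply,
      ContinuousLinearMap.flip_apply, real_inner_comm, inner_gradient_left,
      hu.contDiffAt.isSymmSndFDerivAt (by simp)]
  have hcross : Integrable fun x => ⟪fderiv ℝ H x (gradient u x), gradient u x⟫ :=
    ((((hH.continuous_fderiv one_ne_zero).clm_apply (hu.gradient (n := 1)).continuous).inner
      (hu.gradient (n := 1)).continuous)).integrable_of_hasCompactSupport
      (.intro hHs fun x hx => by simp [fderiv_of_notMem_tsupport ℝ hx])
  simp only [hinner]
  rw [integral_lap_mul_eq_neg_integral_fderiv_gradient hu (hdu.clm_apply hH)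
      (.intro hHs fun x hx => by simp [image_eq_zero_of_notMem_tsupport hx]),
    funext hDf, integral_add hcross (integrable_fderiv_fderiv_apply_gradient hu hH.continuous hHs),
    neg_add']

theorem integral_divE_mul_energy_density {W : ℝ → ℝ} (hW : ContDiff ℝ 1 W)
    (hu : ContDiff ℝ 2 u) (hH : ContDiff ℝ 1 H) (hHs : HasCompactSupport H) (ε : ℝ) :
    ∫ x, divE H x * (ε / 2 * ‖gradient u x‖ ^ 2 + ε⁻¹ * W (u x))
      = -(ε * ∫ x, fderiv ℝ (fderiv ℝ u) x (H x) (gradient u x))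
        - ε⁻¹ * ∫ x, deriv W (u x) * ⟪H x, gradient u x⟫ := by
  have hu1 : ContDiff ℝ 1 u := hu.of_le one_le_two
  have hΦ : ContDiff ℝ 1 fun x => ε / 2 * ‖gradient u x‖ ^ 2 + ε⁻¹ * W (u x) :=
    (contDiff_const.mul ((hu.gradient (n := 1)).norm_sq ℝ)).add (contDiff_const.mul (hW.comp hu1))
  have hDΦ : ∀ x, fderiv ℝ (fun x => ε / 2 * ‖gradient u x‖ ^ 2 + ε⁻¹ * W (u x)) x (H x)
      = ε * fderiv ℝ (fderiv ℝ u) x (H x) (gradient u x)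
        + ε⁻¹ * (deriv W (u x) * ⟪H x, gradient u x⟫) := fun x => by
    have hnorm := hasFDerivAt_norm_sq_gradient
      ((hu.fderiv_right (m := 1) le_rfl).differentiable one_ne_zero x)
    have hWu := (hW.differentiable one_ne_zero (u x)).hasDerivAt.comp_hasFDerivAt x
      (hu1.differentiable one_ne_zero x).hasFDerivAt
    have hΦx : HasFDerivAt (fun x => ε / 2 * ‖gradient u x‖ ^ 2 + ε⁻¹ * W (u x))
        ((ε / 2) • 2 • (fderiv ℝ (fderiv ℝ u) x).flip (gradient u x)
          + ε⁻¹ • deriv W (u x) • fderiv ℝ u x) x :=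
      (hnorm.const_mul (ε / 2)).add (hWu.const_mul ε⁻¹)
    rw [hΦx.fderiv, real_inner_comm, inner_gradient_left]
    simp only [add_apply, smul_apply, ContinuousLinearMap.flip_apply, smul_eq_mul, nsmul_eq_mul]
    ring
  rw [integral_divE_mul_eq_neg_integral_fderiv hH hHs hΦ, funext hDΦ,
    integral_add ((integrable_fderiv_fderiv_apply_gradient hu hH.continuous hHs).const_mul ε)
      ((integrable_mul_inner_gradient (φ := fun x => deriv W (u x))
        ((hW.continuous_deriv le_rfl).comp hu1.continuous) hu1 hH.continuous hHs).const_mul ε⁻¹),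
    integral_const_mul, integral_const_mul, neg_add']

end CrossTerm

theorem integration_by_parts_cross_term_general
    (d : ℕ) (ε : ℝ)
    (W : ℝ → ℝ) (hW : ContDiff ℝ 1 W)
    (u : EuclideanSpace ℝ (Fin d) → ℝ) (hu : ContDiff ℝ 2 u)
    (H : EuclideanSpace ℝ (Fin d) → EuclideanSpace ℝ (Fin d))
    (hH : ContDiff ℝ 1 H) (hHsupp : HasCompactSupport H) :
    (∫ x, (ε * lap u x - ε⁻¹ * deriv W (u x)) * ⟪H x, gradient u x⟫)
      = (∫ x, divE H x * (ε / 2 * ‖gradient u x‖ ^ 2 + ε⁻¹ * W (u x)))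
        - ε * ∫ x, ∑ i, ∑ j,
            (⟪fderiv ℝ H x (eb i), eb j⟫ * ⟪gradient u x, eb i⟫ * ⟪gradient u x, eb j⟫) := by
  have hu1 : ContDiff ℝ 1 u := hu.of_le one_le_two
  have hlap := integrable_mul_inner_gradient (continuous_lap hu) hu1 hH.continuous hHsupp
  have hW' := integrable_mul_inner_gradient (φ := fun x => deriv W (u x))
    ((hW.continuous_deriv le_rfl).comp hu1.continuous) hu1 hH.continuous hHsupp
  have hsplit : ∫ x, (ε * lap u x - ε⁻¹ * deriv W (u x)) * ⟪H x, gradient u x⟫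
      = ε * (∫ x, lap u x * ⟪H x, gradient u x⟫)
        - ε⁻¹ * ∫ x, deriv W (u x) * ⟪H x, gradient u x⟫ := by
    rw [← integral_const_mul, ← integral_const_mul,
      ← integral_sub (hlap.const_mul ε) (hW'.const_mul ε⁻¹)]
    exact integral_congr_ae (.of_forall fun x => by ring)
  simp only [sum_sum_inner_eb_eq_inner_apply_self]
  rw [hsplit, integral_lap_mul_inner_gradient hu hH hHsupp,
    integral_divE_mul_energy_density hW hu hH hHsupp]
  ring

/-- Integration-by-parts identity for the curvature cross term. -/
theorem integration_by_parts_cross_term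
    (d : ℕ) (hd : 1 ≤ d) (ε : ℝ) (hε : 0 < ε)
    (W : ℝ → ℝ) (hW : ContDiff ℝ 1 W)
    (u : EuclideanSpace ℝ (Fin d) → ℝ) (hu : ContDiff ℝ 2 u)
    (H : EuclideanSpace ℝ (Fin d) → EuclideanSpace ℝ (Fin d))
    (hH : ContDiff ℝ 1 H) (hHsupp : HasCompactSupport H) :
    (∫ x, (ε * lap u x - ε⁻¹ * deriv W (u x)) * ⟪H x, gradient u x⟫)
      = (∫ x, divE H x * (ε / 2 * ‖gradient u x‖ ^ 2 + ε⁻¹ * W (u x)))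
        - ε * ∫ x, ∑ i, ∑ j,
            (⟪fderiv ℝ H x (eb i), eb j⟫ * ⟪gradient u x, eb i⟫ * ⟪gradient u x, eb j⟫) :=
  integration_by_parts_cross_term_general d ε W hW u hu H hH hHsupp
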